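/- arXiv:1206.6053 — 3 statements merged into one kernel-verified Lean document; each statement's English description precedes it below -/
import Mathlib

section
/- Let (Ω,P) be a probability space and let μ̂_T, θ̂_T (T ∈ ℕ) be real random variables with μ̂_T → μ in probability where μ < 0, the sequence √T·(μ̂_T − μ) bounded in probability, and θ̂_T → θ in probability with θ > 0. Let Ψ : ℝ → ℝ be non-increasing with 0 ≤ Ψ(x) ≤ 1 for all x and Ψ(x) → 1 as x → −∞, and let K : ℕ → ℝ be positive and increasing with K(T) → ∞. Then √T·Ψ(K(T)·θ̂_T·μ̂_T)·θ̂_T·μ̂_T → −∞ in probability: for every C ∈ ℝ, P(√T·Ψ(K(T)·θ̂_T·μ̂_T)·θ̂_T·μ̂_T < C) → 1 as T → ∞. (Lemma 2, part iii.) -/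
open MeasureTheory Filter Topology ProbabilityTheory Matrix

/-!
On the event where `|μ̂_T − μ| ≤ −μ/2` and `|θ̂_T − θ| ≤ θ/2`, whose probability tends to `1`,
the product `p = θ̂_T μ̂_T` is at most `m = θμ/4 < 0`. Once `K(T)·m` lies below a point `x₀`
beyond which `Ψ ≥ 1/2`, the statistic is at most `√T·m/2`, which eventually drops below any `C`.
-/

noncomputable section

/-- Convergence in probability to a constant `c`: for every `ε > 0`,
`P(|X_T − c| > ε) → 0` as `T → ∞`. -/
def TendstoInProb {Ω : Type*} [MeasurableSpace Ω] (P : Measure Ω)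
    (X : ℕ → Ω → ℝ) (c : ℝ) : Prop :=
  ∀ ε : ℝ, 0 < ε →
    Tendsto (fun T => P {ω | ε < |X T ω - c|}) atTop (nhds 0)

/-- Bounded in probability: for every `η > 0` there are `M > 0` and `T₀` such that
`P(|X_T| > M) ≤ η` for all `T ≥ T₀`. -/
def BoundedInProb {Ω : Type*} [MeasurableSpace Ω] (P : Measure Ω)
    (X : ℕ → Ω → ℝ) : Prop :=
  ∀ η : ℝ, 0 < η → ∃ M : ℝ, 0 < M ∧ ∃ T₀ : ℕ, ∀ T ≥ T₀,
    P {ω | M < |X T ω|} ≤ ENNReal.ofReal η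

section

variable {ι Ω : Type*} [MeasurableSpace Ω] {P : Measure Ω} [IsProbabilityMeasure P] {l : Filter ι}

lemma tendsto_measure_one_of_tendsto_measure_compl {E : ι → Set Ω}
    (h : Tendsto (fun i => P (E i)ᶜ) l (𝓝 0)) : Tendsto (fun i => P (E i)) l (𝓝 1) := by
  have hlower : Tendsto (fun i => 1 - P (E i)ᶜ) l (𝓝 1) := by
    simpa using ENNReal.Tendsto.sub tendsto_const_nhds h (Or.inl ENNReal.one_ne_top)
  refine tendsto_of_tendsto_of_tendsto_of_le_of_le hlower tendsto_const_nhds (fun i => ?_)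
    (fun _ => prob_le_one)
  simpa using measure_univ_le_add_compl (μ := P) (E i)

lemma tendsto_measure_one_of_compl_subset_union {E A B : ι → Set Ω}
    (hsub : ∀ᶠ i in l, (E i)ᶜ ⊆ A i ∪ B i)
    (hA : Tendsto (fun i => P (A i)) l (𝓝 0)) (hB : Tendsto (fun i => P (B i)) l (𝓝 0)) :
    Tendsto (fun i => P (E i)) l (𝓝 1) := by
  refine tendsto_measure_one_of_tendsto_measure_compl ?_
  have hAB : Tendsto (fun i => P (A i) + P (B i)) l (𝓝 0) := by simpa using hA.add hB
  refine tendsto_of_tendsto_of_tendsto_of_le_of_le' tendsto_const_nhds hAB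
    (Eventually.of_forall fun _ => zero_le) ?_
  filter_upwards [hsub] with i hi
  exact (measure_mono hi).trans (measure_union_le _ _)

end

lemma mul_le_of_abs_sub_le_half {x y μ θ : ℝ} (hμ : μ < 0) (hθ : 0 < θ)
    (hx : |x - μ| ≤ -μ / 2) (hy : |y - θ| ≤ θ / 2) : y * x ≤ θ * μ / 4 := by
  have hx' := (abs_le.mp hx).2
  have hy' := (abs_le.mp hy).1
  nlinarith

lemma smoothed_mul_lt {Ψ : ℝ → ℝ} {a x₀ s k p m C : ℝ} (hΨ : ∀ x ≤ x₀, a ≤ Ψ x)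
    (ha : 0 ≤ a) (hs : 0 ≤ s) (hk : 0 ≤ k) (hkm : k * m ≤ x₀) (hm : m ≤ 0) (hp : p ≤ m)
    (hC : s * (a * m) < C) : s * Ψ (k * p) * p < C := by
  have hΨp : a ≤ Ψ (k * p) := hΨ _ ((mul_le_mul_of_nonneg_left hp hk).trans hkm)
  calc s * Ψ (k * p) * p = s * (Ψ (k * p) * p) := mul_assoc _ _ _
    _ ≤ s * (a * p) :=
        mul_le_mul_of_nonneg_left (mul_le_mul_of_nonpos_right hΨp (hp.trans hm)) hs
    _ ≤ s * (a * m) := by gcongr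
    _ < C := hC

theorem smoothed_statistic_tendsto_neg_infty_on_negatives_general
    {Ω : Type*} [MeasurableSpace Ω] (P : Measure Ω) [IsProbabilityMeasure P]
    (μhat θhat : ℕ → Ω → ℝ) (μ θ : ℝ) (hμ : μ < 0) (hθ : 0 < θ)
    (hμhat : TendstoInProb P μhat μ)
    (hθhat : TendstoInProb P θhat θ)
    (Ψ : ℝ → ℝ)
    (hΨbot : Tendsto Ψ atBot (nhds 1))
    (K : ℕ → ℝ)
    (hKtop : Tendsto K atTop atTop) :
    ∀ C : ℝ,
      Tendsto (fun T : ℕ => P {ω | Real.sqrt T * Ψ (K T * (θhat T ω * μhat T ω)) *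
        (θhat T ω * μhat T ω) < C}) atTop (nhds 1) := by
  intro C
  set m : ℝ := θ * μ / 4
  have hm : m < 0 := by have := mul_neg_of_pos_of_neg hθ hμ; simp only [m]; linarith
  obtain ⟨x₀, hx₀⟩ : ∃ x₀, ∀ x ≤ x₀, (1 / 2 : ℝ) ≤ Ψ x :=
    eventually_atBot.mp (hΨbot.eventually (eventually_ge_nhds (by norm_num)))
  have hsqrt : Tendsto (fun T : ℕ => Real.sqrt T * (1 / 2 * m)) atTop atBot :=
    (Real.tendsto_sqrt_atTop.comp tendsto_natCast_atTop_atTop).atTop_mul_const_of_neg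
      (by linarith)
  have hev : ∀ᶠ T in atTop, 0 ≤ K T ∧ K T * m ≤ x₀ ∧ Real.sqrt T * (1 / 2 * m) < C :=
    (hKtop.eventually_ge_atTop 0).and
      (((hKtop.atTop_mul_const_of_neg hm).eventually_le_atBot x₀).and
        (hsqrt.eventually_lt_atBot C))
  refine tendsto_measure_one_of_compl_subset_union ?_ (hμhat (-μ / 2) (by linarith))
    (hθhat (θ / 2) (by linarith))
  filter_upwards [hev] with T ⟨hK, hKm, hC⟩ ω hω
  by_contra hgood
  simp only [Set.mem_union, Set.mem_ofPred_eq, not_or, not_lt] at hgood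
  exact hω (smoothed_mul_lt hx₀ (by norm_num) (Real.sqrt_nonneg _) hK hKm hm.le
    (mul_le_of_abs_sub_le_half hμ hθ hgood.1 hgood.2) hC)

/-- Lemma 2, part iii: for `μ < 0`, `√T·Ψ(K(T)·θ̂_T·μ̂_T)·θ̂_T·μ̂_T → −∞` in probability:
for every `C`, `P(√T·Ψ(K(T)·θ̂_T·μ̂_T)·θ̂_T·μ̂_T < C) → 1`. -/
theorem smoothed_statistic_tendsto_neg_infty_on_negatives
    {Ω : Type*} [MeasurableSpace Ω] (P : Measure Ω) [IsProbabilityMeasure P]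
    (μhat θhat : ℕ → Ω → ℝ) (μ θ : ℝ) (hμ : μ < 0) (hθ : 0 < θ)
    (hμhat : TendstoInProb P μhat μ)
    (hμhatbd : BoundedInProb P (fun T ω => Real.sqrt T * (μhat T ω - μ)))
    (hθhat : TendstoInProb P θhat θ)
    (Ψ : ℝ → ℝ) (hΨanti : Antitone Ψ) (hΨ01 : ∀ x : ℝ, 0 ≤ Ψ x ∧ Ψ x ≤ 1)
    (hΨbot : Tendsto Ψ atBot (nhds 1))
    (K : ℕ → ℝ) (hKpos : ∀ T, 0 < K T) (hKmono : StrictMono K)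
    (hKtop : Tendsto K atTop atTop) :
    ∀ C : ℝ,
      Tendsto (fun T : ℕ => P {ω | Real.sqrt T * Ψ (K T * (θhat T ω * μhat T ω)) *
        (θhat T ω * μhat T ω) < C}) atTop (nhds 1) :=
  smoothed_statistic_tendsto_neg_infty_on_negatives_general P μhat θhat μ θ hμ hθ hμhat hθhat Ψ
    hΨbot K hKtop

end
end

section
/- Let Ψ, ψ̃, a₁ < … < aₙ, b_Ψ and Λ_T be as in the piecewise-smooth indicator setup, and let K : ℕ → ℝ be positive with K(T)/√T → 0 as T → ∞. On a probability space (Ω,P), let v̂_T be almost surely nonnegative real random variables with v̂_T → v in probability for some v ≥ 0, let θ̂_T be almost surely positive real random variables with θ̂_T → θ in probability for some θ > 0, and let μ̂_T be arbitrary real random variables. Then Λ_T(θ̂_T·μ̂_T, θ̂_T²·v̂_T) → 0 in probability as T → ∞. (Lemma 3.) -/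
/-!
Uniformly in `m`, and for all `0 ≤ w ≤ W`, the adjustment term is bounded by
`W·b_Ψ·K(T)/√T + Σᵢ |Ψ(aᵢ⁻) − Ψ(aᵢ⁺)|·√W·φ(aᵢ√T/(K(T)√W))`, because `s ↦ s·φ(c/s)` is
nondecreasing on `[0, ∞)`. This bound tends to `0` since `K(T)/√T → 0` and every `aᵢ ≠ 0`.
Outside an event of vanishing probability, `v̂_T ≥ 0`, `v̂_T ≤ |v| + 1` and `|θ̂_T| ≤ |θ| + 1`,
so `θ̂_T²·v̂_T ≤ W := (|θ| + 1)²(|v| + 1)` there.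
-/

open MeasureTheory Filter Topology ProbabilityTheory Matrix

noncomputable section

/-- The standard normal density `φ(x) = exp(−x²/2)/√(2π)`. -/
def normalPDF (x : ℝ) : ℝ := Real.exp (-(x ^ 2) / 2) / Real.sqrt (2 * Real.pi)

/-- The adjustment term
`Λ_T(m, v) = v·ψ̃(K(T)·m)·K(T)/√T − √v·Σᵢ (Ψ(aᵢ⁻) − Ψ(aᵢ⁺))·φ(aᵢ·√T/(√v·K(T)))`,
where `ψt` is the left-limit of the derivative of `Ψ` and `ΨL i`, `ΨR i` are the
one-sided limits of `Ψ` at the discontinuity points `a i`. -/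
def Lambda (K : ℕ → ℝ) (ψt : ℝ → ℝ) {n : ℕ} (a ΨL ΨR : Fin n → ℝ)
    (T : ℕ) (m v : ℝ) : ℝ :=
  v * ψt (K T * m) * K T / Real.sqrt T -
    Real.sqrt v * ∑ i, (ΨL i - ΨR i) * normalPDF (a i * Real.sqrt T / (Real.sqrt v * K T))

theorem abs_le_of_tendsto_nhdsLT_of_abs_le_off_finite {f : ℝ → ℝ} {s : Set ℝ} (hs : s.Finite)
    {b x y : ℝ} (hf : ∀ z ∉ s, |f z| ≤ b) (hy : Tendsto f (𝓝[<] x) (𝓝 y)) : |y| ≤ b := by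
  have hs' : sᶜ ∈ 𝓝[<] x := by
    have := nhdsNE_of_nhdsNE_sdiff_finite (x := x) univ_mem hs.to_subtype
    exact nhdsLT_le_nhdsNE x (by rwa [← Set.compl_eq_univ_sdiff] at this)
  exact le_of_tendsto hy.abs (eventually_of_mem hs' hf)

lemma normalPDF_nonneg (x : ℝ) : 0 ≤ normalPDF x := by
  unfold normalPDF
  positivity

lemma normalPDF_le_normalPDF {x y : ℝ} (h : y ^ 2 ≤ x ^ 2) : normalPDF x ≤ normalPDF y := by
  unfold normalPDF
  gcongr

lemma monotoneOn_mul_normalPDF_div (c : ℝ) :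
    MonotoneOn (fun s => s * normalPDF (c / s)) (Set.Ici 0) := by
  intro s (hs : 0 ≤ s) S (hS : 0 ≤ S) hsS
  rcases hs.eq_or_lt with rfl | hs
  · simpa using mul_nonneg hS (normalPDF_nonneg _)
  · refine mul_le_mul hsS (normalPDF_le_normalPDF ?_) (normalPDF_nonneg _) hS
    rw [div_pow, div_pow]
    gcongr

lemma tendsto_normalPDF_of_tendsto_sq_atTop {ι : Type*} {l : Filter ι} {f : ι → ℝ}
    (hf : Tendsto (fun i => f i ^ 2) l atTop) : Tendsto (fun i => normalPDF (f i)) l (𝓝 0) := by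
  have hexp : Tendsto (fun i => Real.exp (-(f i ^ 2 / 2))) l (𝓝 0) :=
    Real.tendsto_exp_atBot.comp (tendsto_neg_atTop_atBot.comp (hf.atTop_div_const two_pos))
  simpa only [normalPDF, neg_div, zero_div] using hexp.div_const (Real.sqrt (2 * Real.pi))

section AdjustmentBound

variable (K : ℕ → ℝ) {n : ℕ} (a ΨL ΨR : Fin n → ℝ)

def adjustmentBound (b W : ℝ) (T : ℕ) : ℝ :=
  W * b * (K T / Real.sqrt T) +
    ∑ i, |ΨL i - ΨR i| * (Real.sqrt W * normalPDF (a i * Real.sqrt T / K T / Real.sqrt W))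

lemma abs_Lambda_le_adjustmentBound (ψt : ℝ → ℝ) {b W : ℝ} (hψt : ∀ x, |ψt x| ≤ b) {T : ℕ}
    (hK : 0 ≤ K T) (m : ℝ) {w : ℝ} (hw : 0 ≤ w) (hwW : w ≤ W) :
    |Lambda K ψt a ΨL ΨR T m w| ≤ adjustmentBound K a ΨL ΨR b W T := by
  have hdrift : |w * ψt (K T * m) * K T / Real.sqrt T| ≤ W * b * (K T / Real.sqrt T) := by
    rw [mul_div_assoc, abs_mul, abs_mul, abs_of_nonneg hw,
      abs_of_nonneg (by positivity : 0 ≤ K T / Real.sqrt T)]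
    exact mul_le_mul_of_nonneg_right (mul_le_mul hwW (hψt _) (abs_nonneg _) (hw.trans hwW))
      (by positivity)
  have hjump : ∀ i, |Real.sqrt w * ((ΨL i - ΨR i) *
        normalPDF (a i * Real.sqrt T / (Real.sqrt w * K T)))|
      ≤ |ΨL i - ΨR i| * (Real.sqrt W * normalPDF (a i * Real.sqrt T / K T / Real.sqrt W)) := by
    intro i
    rw [mul_left_comm, abs_mul, abs_mul, abs_of_nonneg (normalPDF_nonneg _),
      abs_of_nonneg (Real.sqrt_nonneg w), mul_comm (Real.sqrt w) (K T), ← div_div]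
    exact mul_le_mul_of_nonneg_left (monotoneOn_mul_normalPDF_div _ (Real.sqrt_nonneg w)
      (Real.sqrt_nonneg W) (Real.sqrt_le_sqrt hwW)) (abs_nonneg _)
  calc |Lambda K ψt a ΨL ΨR T m w|
      ≤ |w * ψt (K T * m) * K T / Real.sqrt T| + |Real.sqrt w * ∑ i, (ΨL i - ΨR i) *
          normalPDF (a i * Real.sqrt T / (Real.sqrt w * K T))| := abs_sub _ _
    _ ≤ adjustmentBound K a ΨL ΨR b W T := by
      rw [Finset.mul_sum]
      exact add_le_add hdrift
        ((Finset.abs_sum_le_sum_abs _ _).trans (Finset.sum_le_sum fun i _ => hjump i))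

lemma tendsto_sqrt_div_atTop_of_tendsto_div_sqrt (hK : ∀ T, 0 < K T)
    (hKo : Tendsto (fun T : ℕ => K T / Real.sqrt T) atTop (𝓝 0)) :
    Tendsto (fun T : ℕ => Real.sqrt T / K T) atTop atTop := by
  have hpos : ∀ᶠ T : ℕ in atTop, K T / Real.sqrt T ∈ Set.Ioi 0 := by
    filter_upwards [eventually_ge_atTop 1] with T hT
    exact div_pos (hK T) (Real.sqrt_pos.mpr (by exact_mod_cast hT))
  simpa only [Pi.inv_def, inv_div] using
    (tendsto_nhdsWithin_iff.mpr ⟨hKo, hpos⟩).inv_tendsto_nhdsGT_zero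

lemma tendsto_adjustmentBound (hane : ∀ i, a i ≠ 0) (hK : ∀ T, 0 < K T)
    (hKo : Tendsto (fun T : ℕ => K T / Real.sqrt T) atTop (𝓝 0)) (b : ℝ) {W : ℝ} (hW : 0 < W) :
    Tendsto (adjustmentBound K a ΨL ΨR b W) atTop (𝓝 0) := by
  have hjump : ∀ i, Tendsto (fun T : ℕ =>
      normalPDF (a i * Real.sqrt T / K T / Real.sqrt W)) atTop (𝓝 0) := by
    intro i
    refine tendsto_normalPDF_of_tendsto_sq_atTop ?_
    have hratio := tendsto_sqrt_div_atTop_of_tendsto_div_sqrt K hK hKo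
    have hsq := ((tendsto_pow_atTop two_ne_zero).comp hratio).const_mul_atTop
      (by have := hane i; positivity : 0 < a i ^ 2 / W)
    refine hsq.congr fun T => ?_
    simp only [Function.comp_apply, div_pow, mul_pow, Real.sq_sqrt hW.le]
    ring
  have hsum := tendsto_finsetSum Finset.univ fun i _ =>
    ((hjump i).const_mul (Real.sqrt W)).const_mul |ΨL i - ΨR i|
  unfold adjustmentBound
  simpa using (hKo.const_mul (W * b)).add hsum

end AdjustmentBound

section Probability

variable {Ω : Type*} [MeasurableSpace Ω] {P : Measure Ω}

lemma tendsto_measure_union_of_tendsto_zero {A B : ℕ → Set Ω}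
    (hA : Tendsto (fun T => P (A T)) atTop (𝓝 0)) (hB : Tendsto (fun T => P (B T)) atTop (𝓝 0)) :
    Tendsto (fun T => P (A T ∪ B T)) atTop (𝓝 0) :=
  tendsto_of_tendsto_of_tendsto_of_le_of_le tendsto_const_nhds (by simpa using hA.add hB)
    (fun _ => zero_le) (fun _ => measure_union_le _ _)

lemma tendstoInProb_zero_of_abs_le_off {X : ℕ → Ω → ℝ} {D : ℕ → ℝ} {E : ℕ → Set Ω}
    (hD : Tendsto D atTop (𝓝 0)) (hE : Tendsto (fun T => P (E T)) atTop (𝓝 0))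
    (hX : ∀ T, ∀ ω ∉ E T, |X T ω| ≤ D T) : TendstoInProb P X 0 := by
  intro ε hε
  refine tendsto_of_tendsto_of_tendsto_of_le_of_le' tendsto_const_nhds hE
    (Eventually.of_forall fun _ => zero_le) ?_
  filter_upwards [hD.eventually_lt_const hε] with T hT
  refine measure_mono fun ω (hω : ε < |X T ω - 0|) => ?_
  by_contra hωE
  rw [sub_zero] at hω
  linarith [hX T ω hωE]

end Probability

theorem adjustment_term_tendsto_zero_general
    {Ω : Type*} [MeasurableSpace Ω] (P : Measure Ω)
    -- the piecewise-smooth indicator setup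
    (ψ ψt : ℝ → ℝ) {n : ℕ} (a ΨL ΨR : Fin n → ℝ) (bΨ : ℝ)
    (hane : ∀ i, a i ≠ 0)
    (hψbd : ∀ x ∉ Set.range a, |ψ x| ≤ bΨ)
    (hψt : ∀ x : ℝ, Tendsto ψ (nhdsWithin x (Set.Iio x)) (nhds (ψt x)))
    -- the tuning sequence
    (K : ℕ → ℝ) (hKpos : ∀ T, 0 < K T)
    (hKo : Tendsto (fun T : ℕ => K T / Real.sqrt T) atTop (nhds 0))
    -- the random variables
    (vhat θhat μhat : ℕ → Ω → ℝ) (v θ : ℝ)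
    (hvhatpos : ∀ T, ∀ᵐ ω ∂P, 0 ≤ vhat T ω)
    (hvhat : TendstoInProb P vhat v) (hθhat : TendstoInProb P θhat θ) :
    TendstoInProb P
      (fun T ω => Lambda K ψt a ΨL ΨR T (θhat T ω * μhat T ω)
        ((θhat T ω) ^ 2 * vhat T ω)) 0 := by
  have hψt_le : ∀ x, |ψt x| ≤ bΨ := fun x =>
    abs_le_of_tendsto_nhdsLT_of_abs_le_off_finite (Set.finite_range a) hψbd (hψt x)
  have hW : 0 < (|θ| + 1) ^ 2 * (|v| + 1) := by positivity
  refine tendstoInProb_zero_of_abs_le_off (P := P)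
    (tendsto_adjustmentBound K a ΨL ΨR hane hKpos hKo bΨ hW)
    (E := fun T => {ω | 1 < |vhat T ω - v|} ∪ {ω | 1 < |θhat T ω - θ|} ∪ {ω | ¬ 0 ≤ vhat T ω})
    (tendsto_measure_union_of_tendsto_zero
      (tendsto_measure_union_of_tendsto_zero (hvhat 1 one_pos) (hθhat 1 one_pos))
      (by simp only [ae_iff.mp (hvhatpos _), tendsto_const_nhds])) ?_
  intro T ω hω
  simp only [Set.mem_union, Set.mem_ofPred_eq, not_or, not_lt, not_not] at hω
  obtain ⟨⟨hv1, hθ1⟩, hv0⟩ := hω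
  have hθle : |θhat T ω| ≤ |θ| + 1 := by linarith [abs_sub_abs_le_abs_sub (θhat T ω) θ]
  have hvle : vhat T ω ≤ |v| + 1 := by linarith [le_abs_self (vhat T ω - v), le_abs_self v]
  refine abs_Lambda_le_adjustmentBound K a ΨL ΨR ψt hψt_le (hKpos T).le _ (by positivity) ?_
  calc θhat T ω ^ 2 * vhat T ω = |θhat T ω| ^ 2 * vhat T ω := by rw [sq_abs]
    _ ≤ (|θ| + 1) ^ 2 * (|v| + 1) := by gcongr

/-- Lemma 3: the adjustment term `Λ_T(θ̂_T·μ̂_T, θ̂_T²·v̂_T)` tends to `0` in probability. -/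
theorem adjustment_term_tendsto_zero
    {Ω : Type*} [MeasurableSpace Ω] (P : Measure Ω) [IsProbabilityMeasure P]
    -- the piecewise-smooth indicator setup
    (Ψ ψ ψt : ℝ → ℝ) {n : ℕ} (a ΨL ΨR : Fin n → ℝ) (bΨ : ℝ)
    (hΨanti : Antitone Ψ) (hΨ01 : ∀ x : ℝ, 0 ≤ Ψ x ∧ Ψ x ≤ 1)
    (ha : StrictMono a) (hane : ∀ i, a i ≠ 0)
    (hderiv : ∀ x ∉ Set.range a, HasDerivAt Ψ (ψ x) x)
    (hψcont : ContinuousOn ψ (Set.range a)ᶜ)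
    (hψbd : ∀ x ∉ Set.range a, |ψ x| ≤ bΨ)
    (hψt : ∀ x : ℝ, Tendsto ψ (nhdsWithin x (Set.Iio x)) (nhds (ψt x)))
    (hΨL : ∀ i, Tendsto Ψ (nhdsWithin (a i) (Set.Iio (a i))) (nhds (ΨL i)))
    (hΨR : ∀ i, Tendsto Ψ (nhdsWithin (a i) (Set.Ioi (a i))) (nhds (ΨR i)))
    -- the tuning sequence
    (K : ℕ → ℝ) (hKpos : ∀ T, 0 < K T)
    (hKo : Tendsto (fun T : ℕ => K T / Real.sqrt T) atTop (nhds 0))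
    -- the random variables
    (vhat θhat μhat : ℕ → Ω → ℝ) (v θ : ℝ) (hv : 0 ≤ v) (hθ : 0 < θ)
    (hvhatpos : ∀ T, ∀ᵐ ω ∂P, 0 ≤ vhat T ω)
    (hθhatpos : ∀ T, ∀ᵐ ω ∂P, 0 < θhat T ω)
    (hvhat : TendstoInProb P vhat v) (hθhat : TendstoInProb P θhat θ) :
    TendstoInProb P
      (fun T ω => Lambda K ψt a ΨL ΨR T (θhat T ω * μhat T ω)
        ((θhat T ω) ^ 2 * vhat T ω)) 0 :=
  adjustment_term_tendsto_zero_general P ψ ψt a ΨL ΨR bΨ hane hψbd hψt K hKpos hKo vhat θhat μhat v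
    θ hvhatpos hvhat hθhat

end
end

section
/- Under the smoothed-indicator test setup, suppose μ_j > 0 for all j ∈ {1,…,p}. Then Q → 1 in probability as T → ∞. (Theorem 1, part 2.) -/
open MeasureTheory Filter Topology ProbabilityTheory Matrix

noncomputable section

/-- Convergence in distribution: weak convergence of the laws of `X_T` under `P`
to the measure `ν` (tested against bounded continuous functions). -/
def TendstoInDistrib {Ω : Type*} [MeasurableSpace Ω] (P : Measure Ω)
    {E : Type*} [MeasurableSpace E] [TopologicalSpace E]
    (X : ℕ → Ω → E) (ν : Measure E) : Prop :=
  ∀ f : BoundedContinuousFunction E ℝ,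
    Tendsto (fun T => ∫ ω, f (X T ω) ∂P) atTop (nhds (∫ x, f x ∂ν))

/-- The standard normal CDF `Φ`. -/
def stdNormalCDF (x : ℝ) : ℝ := ∫ t in Set.Iic x, normalPDF t

/-- The Gaussian measure `N(c, V)` on `ℝᵖ`: the pushforward of the product of `p`
standard Gaussian measures under `z ↦ c + V^{1/2}·z`, where `V^{1/2}` is the positive
semidefinite square root of `V`. -/
def gaussianPi {p : ℕ} (c : Fin p → ℝ) {V : Matrix (Fin p) (Fin p) ℝ}
    (hV : V.PosSemidef) : Measure (Fin p → ℝ) :=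
  Measure.map (fun z => c + ((hV.1.eigenvectorUnitary : Matrix (Fin p) (Fin p) ℝ) *
      diagonal (fun i => Real.sqrt (hV.1.eigenvalues i)) *
      (star hV.1.eigenvectorUnitary : Matrix (Fin p) (Fin p) ℝ)).mulVec z)
    (Measure.pi fun _ : Fin p => gaussianReal 0 1)

/-- `Ψ̂_{T,j} = Ψ(K(T)·θ̂_{T,j}·μ̂_{T,j})`. -/
def Psihat {p : ℕ} {Ω : Type*} (Ψ : ℝ → ℝ) (K : ℕ → ℝ)
    (muhat thetahat : ℕ → Ω → Fin p → ℝ) (T : ℕ) (ω : Ω) (j : Fin p) : ℝ :=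
  Ψ (K T * thetahat T ω j * muhat T ω j)

/-- The statistic `Q₁ = √T·Σⱼ Ψ̂_{T,j}·θ̂_{T,j}·μ̂_{T,j} − Σⱼ Λ_T(θ̂_{T,j}·μ̂_{T,j}, θ̂_{T,j}²·v̂_{T,jj})`. -/
def Q1stat {p : ℕ} {Ω : Type*} (Ψ ψt : ℝ → ℝ) {n : ℕ} (a ΨL ΨR : Fin n → ℝ)
    (K : ℕ → ℝ) (muhat : ℕ → Ω → Fin p → ℝ)
    (Vhat : ℕ → Ω → Matrix (Fin p) (Fin p) ℝ)
    (thetahat : ℕ → Ω → Fin p → ℝ) (T : ℕ) (ω : Ω) : ℝ :=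
  Real.sqrt T * ∑ j, Psihat Ψ K muhat thetahat T ω j * thetahat T ω j * muhat T ω j
    - ∑ j, Lambda K ψt a ΨL ΨR T (thetahat T ω j * muhat T ω j)
        ((thetahat T ω j) ^ 2 * Vhat T ω j j)

/-- The statistic `Q₂ = √(Σᵢ Σⱼ Ψ̂_{T,i}·θ̂_{T,i}·v̂_{T,ij}·θ̂_{T,j}·Ψ̂_{T,j})`. -/
def Q2stat {p : ℕ} {Ω : Type*} (Ψ : ℝ → ℝ) (K : ℕ → ℝ)
    (muhat : ℕ → Ω → Fin p → ℝ)
    (Vhat : ℕ → Ω → Matrix (Fin p) (Fin p) ℝ)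
    (thetahat : ℕ → Ω → Fin p → ℝ) (T : ℕ) (ω : Ω) : ℝ :=
  Real.sqrt (∑ i, ∑ j, Psihat Ψ K muhat thetahat T ω i * thetahat T ω i *
    Vhat T ω i j * thetahat T ω j * Psihat Ψ K muhat thetahat T ω j)

/-- The test statistic `Q = Φ(Q₁/Q₂)` if `Q₂ > 0`, and `Q = 1` if `Q₂ = 0`. -/
def Qstat {p : ℕ} {Ω : Type*} (Ψ ψt : ℝ → ℝ) {n : ℕ} (a ΨL ΨR : Fin n → ℝ)
    (K : ℕ → ℝ) (muhat : ℕ → Ω → Fin p → ℝ)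
    (Vhat : ℕ → Ω → Matrix (Fin p) (Fin p) ℝ)
    (thetahat : ℕ → Ω → Fin p → ℝ) (T : ℕ) (ω : Ω) : ℝ :=
  if 0 < Q2stat Ψ K muhat Vhat thetahat T ω then
    stdNormalCDF (Q1stat Ψ ψt a ΨL ΨR K muhat Vhat thetahat T ω /
      Q2stat Ψ K muhat Vhat thetahat T ω)
  else 1

/-!
Because `Ψ` is non-increasing, its derivative (hence `ψ̃`) is nonpositive and its jumps go
downwards, so the adjustment `Λ_T` is nonpositive and `Q₁ ≥ √T·Σⱼ Ψ̂_{T,j}·θ̂_{T,j}·μ̂_{T,j}`.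
On the event where every `θ̂_{T,j}·μ̂_{T,j}` exceeds some `c > 0` and every
`θ̂_{T,i}·v̂_{T,ij}·θ̂_{T,j}` stays below some `B`, this gives `Q₁ ≥ √T·c·S` and `Q₂ ≤ √B·S`
with `S = Σⱼ Ψ̂_{T,j}`, hence `1 ≥ Q ≥ Φ(√T·c/√B) → 1`. That event has probability tending to
one: `θ̂_T` and `V̂_T` are consistent, and so is `μ̂_T`, since `√T·(μ̂_T − μ)` converges in
distribution to a probability measure, which is tight.
-/

lemma normalPDF_eq_gaussianPDFReal : normalPDF = gaussianPDFReal 0 1 := by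
  funext x
  simp [normalPDF, gaussianPDFReal]
  ring

lemma integrable_normalPDF : Integrable normalPDF :=
  normalPDF_eq_gaussianPDFReal ▸ integrable_gaussianPDFReal 0 1

lemma integral_normalPDF : ∫ x, normalPDF x = 1 :=
  normalPDF_eq_gaussianPDFReal ▸ integral_gaussianPDFReal_eq_one 0 one_ne_zero

lemma stdNormalCDF_le_one (x : ℝ) : stdNormalCDF x ≤ 1 :=
  integral_normalPDF ▸
    setIntegral_le_integral integrable_normalPDF (ae_of_all _ normalPDF_nonneg)

lemma monotone_stdNormalCDF : Monotone stdNormalCDF := fun _ _ hxy =>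
  setIntegral_mono_set integrable_normalPDF.integrableOn (ae_of_all _ normalPDF_nonneg)
    (Set.Iic_subset_Iic.2 hxy).eventuallyLE

lemma tendsto_stdNormalCDF_atTop : Tendsto stdNormalCDF atTop (𝓝 1) :=
  integral_normalPDF ▸
    (aecover_Iic tendsto_id).integral_tendsto_of_countably_generated integrable_normalPDF

instance isProbabilityMeasure_gaussianPi {p : ℕ} (c : Fin p → ℝ) {V : Matrix (Fin p) (Fin p) ℝ}
    (hV : V.PosSemidef) : IsProbabilityMeasure (gaussianPi c hV) :=
  Measure.isProbabilityMeasure_map (by fun_prop)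

lemma Antitone.le_of_tendsto_nhdsLT_of_tendsto_nhdsGT {f : ℝ → ℝ} (hf : Antitone f)
    {x l r : ℝ} (hl : Tendsto f (𝓝[<] x) (𝓝 l)) (hr : Tendsto f (𝓝[>] x) (𝓝 r)) : r ≤ l :=
  (_root_.le_of_tendsto hr (eventually_nhdsWithin_of_forall fun _ hy => hf (le_of_lt hy))).trans
    (_root_.ge_of_tendsto hl (eventually_nhdsWithin_of_forall fun _ hy => hf (le_of_lt hy)))

lemma Antitone.nonpos_of_tendsto_nhdsLT_of_hasDerivAt {f f' : ℝ → ℝ} (hf : Antitone f)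
    {S : Set ℝ} (hS : S.Finite) (hderiv : ∀ x ∉ S, HasDerivAt f (f' x) x) {x l : ℝ}
    (hl : Tendsto f' (𝓝[<] x) (𝓝 l)) : l ≤ 0 := by
  have hS' : ∀ᶠ y in 𝓝[<] x, y ∈ Set.univ \ S :=
    nhdsWithin_mono x (fun y hy => ne_of_lt hy) (nhdsNE_of_nhdsNE_sdiff_finite univ_mem hS)
  exact _root_.le_of_tendsto hl (hS'.mono fun y hy => (hderiv y hy.2).deriv ▸ hf.deriv_nonpos)

section MeasureTendstoZero

variable {Ω ι κ : Type*} [MeasurableSpace Ω] {P : Measure Ω} {l : Filter ι}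

lemma tendsto_measure_union_nhds_zero {s t : ι → Set Ω}
    (hs : Tendsto (fun i => P (s i)) l (𝓝 0)) (ht : Tendsto (fun i => P (t i)) l (𝓝 0)) :
    Tendsto (fun i => P (s i ∪ t i)) l (𝓝 0) :=
  tendsto_nhds_bot_mono (by simpa using hs.add ht)
    (Eventually.of_forall fun _ => measure_union_le _ _)

lemma tendsto_measure_iUnion_nhds_zero [Fintype κ] {s : κ → ι → Set Ω}
    (hs : ∀ k, Tendsto (fun i => P (s k i)) l (𝓝 0)) :
    Tendsto (fun i => P (⋃ k, s k i)) l (𝓝 0) :=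
  tendsto_nhds_bot_mono (by simpa using tendsto_finsetSum Finset.univ fun k _ => hs k)
    (Eventually.of_forall fun _ => measure_iUnion_fintype_le _ _)

end MeasureTendstoZero

namespace TendstoInProb

variable {Ω : Type*} [MeasurableSpace Ω] {P : Measure Ω} {X Y : ℕ → Ω → ℝ} {x y : ℝ}

lemma tendsto_measure_le (hX : TendstoInProb P X x) {b : ℝ} (hb : b < x) :
    Tendsto (fun T => P {ω | X T ω ≤ b}) atTop (𝓝 0) :=
  tendsto_nhds_bot_mono (hX ((x - b) / 2) (by linarith)) <| Eventually.of_forall fun T =>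
    measure_mono fun ω (hω : X T ω ≤ b) => show (x - b) / 2 < |X T ω - x| by
      rw [abs_sub_comm]
      exact (by linarith : (x - b) / 2 < x - X T ω).trans_le (le_abs_self _)

lemma tendsto_measure_ge (hX : TendstoInProb P X x) {b : ℝ} (hb : x < b) :
    Tendsto (fun T => P {ω | b ≤ X T ω}) atTop (𝓝 0) :=
  tendsto_nhds_bot_mono (hX ((b - x) / 2) (by linarith)) <| Eventually.of_forall fun T =>
    measure_mono fun ω (hω : b ≤ X T ω) => show (b - x) / 2 < |X T ω - x| from
      (by linarith : (b - x) / 2 < X T ω - x).trans_le (le_abs_self _)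

lemma comp₂ {f : ℝ → ℝ → ℝ} (hf : ContinuousAt (Function.uncurry f) (x, y))
    (hX : TendstoInProb P X x) (hY : TendstoInProb P Y y) :
    TendstoInProb P (fun T ω => f (X T ω) (Y T ω)) (f x y) := by
  intro ε hε
  obtain ⟨δ, hδ, hfδ⟩ := Metric.continuousAt_iff.1 hf ε hε
  have hsub : ∀ T, {ω | ε < |f (X T ω) (Y T ω) - f x y|} ⊆
      {ω | δ / 2 < |X T ω - x|} ∪ {ω | δ / 2 < |Y T ω - y|} := by
    intro T ω hω
    by_contra hnear
    simp only [Set.mem_union, Set.mem_ofPred_eq, not_or, not_lt] at hω hnear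
    have hdist : dist (X T ω, Y T ω) (x, y) < δ := by
      rw [Prod.dist_eq, Real.dist_eq, Real.dist_eq]
      exact max_lt (by linarith) (by linarith)
    exact hω.not_gt (hfδ hdist)
  exact tendsto_nhds_bot_mono
    (tendsto_measure_union_nhds_zero (hX _ (half_pos hδ)) (hY _ (half_pos hδ)))
    (Eventually.of_forall fun T => measure_mono (hsub T))

lemma mul (hX : TendstoInProb P X x) (hY : TendstoInProb P Y y) :
    TendstoInProb P (fun T ω => X T ω * Y T ω) (x * y) :=
  comp₂ continuous_mul.continuousAt hX hY

end TendstoInProb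

lemma tendstoInProb_of_le_of_ae_ge {Ω : Type*} [MeasurableSpace Ω] {P : Measure Ω}
    {Y : ℕ → Ω → ℝ} {y : ℝ} {L : ℕ → ℝ} {E : ℕ → Set Ω} (hle : ∀ T ω, Y T ω ≤ y)
    (hL : Tendsto L atTop (𝓝 y)) (hE : Tendsto (fun T => P (E T)) atTop (𝓝 0))
    (hge : ∀ T, ∀ᵐ ω ∂P, ω ∉ E T → L T ≤ Y T ω) : TendstoInProb P Y y := by
  intro ε hε
  refine tendsto_nhds_bot_mono hE ?_
  filter_upwards [hL.eventually (eventually_gt_nhds (by linarith : y - ε < y))] with T hT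
  refine measure_mono_ae ?_
  filter_upwards [hge T] with ω hω hfar
  by_contra hgood
  replace hfar : ε < |y - Y T ω| := abs_sub_comm (Y T ω) y ▸ hfar
  rw [abs_of_nonneg (sub_nonneg.2 (hle T ω))] at hfar
  linarith [hω hgood]

section Consistency

open scoped BoundedContinuousFunction

variable {E : Type*} [NormedAddCommGroup E]

def normCutoff (k : ℝ) : E →ᵇ ℝ :=
  BoundedContinuousFunction.mkOfBound ⟨fun x => min 1 (max (‖x‖ - k) 0), by fun_prop⟩ 1
    fun x y => Real.dist_le_of_mem_Icc_01
      ⟨le_min zero_le_one (le_max_right _ _), min_le_left _ _⟩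
      ⟨le_min zero_le_one (le_max_right _ _), min_le_left _ _⟩

lemma normCutoff_nonneg (k : ℝ) (x : E) : 0 ≤ normCutoff k x :=
  le_min zero_le_one (le_max_right _ _)

lemma normCutoff_le_one (k : ℝ) (x : E) : normCutoff k x ≤ 1 :=
  min_le_left _ _

lemma normCutoff_eq_one {k : ℝ} {x : E} (hx : k + 1 ≤ ‖x‖) : normCutoff k x = 1 :=
  min_eq_left (le_max_of_le_left (by linarith))

lemma normCutoff_eq_zero {k : ℝ} {x : E} (hx : ‖x‖ ≤ k) : normCutoff k x = 0 := by
  show min 1 (max (‖x‖ - k) 0) = 0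
  rw [max_eq_right (by linarith), min_eq_right zero_le_one]

lemma tendsto_integral_normCutoff [MeasurableSpace E] [OpensMeasurableSpace E] (ν : Measure E)
    [IsFiniteMeasure ν] :
    Tendsto (fun k => ∫ x, normCutoff k x ∂ν) atTop (𝓝 0) := by
  have h := tendsto_integral_filter_of_dominated_convergence (μ := ν) (l := atTop)
    (F := fun k x => normCutoff k x) (f := 0) (fun _ => 1)
    (Eventually.of_forall fun k => (normCutoff k).continuous.aestronglyMeasurable)
    (Eventually.of_forall fun k => ae_of_all _ fun x => by
      rw [Real.norm_of_nonneg (normCutoff_nonneg k x)]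
      exact normCutoff_le_one k x)
    (integrable_const 1)
    (ae_of_all _ fun x => tendsto_const_nhds.congr' <|
      (eventually_ge_atTop ‖x‖).mono fun k hk => (normCutoff_eq_zero hk).symm)
  simpa using h

lemma TendstoInDistrib.eventually_integrable_comp {Ω F : Type*} [MeasurableSpace Ω]
    [TopologicalSpace F] [MeasurableSpace F] [OpensMeasurableSpace F]
    {P : Measure Ω} [IsFiniteMeasure P] {X : ℕ → Ω → F} {ν : Measure F} [IsProbabilityMeasure ν]
    (hX : TendstoInDistrib P X ν) (f : F →ᵇ ℝ) :
    ∀ᶠ T in atTop, Integrable (fun ω => f (X T ω)) P := by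
  -- A non-integrable `f ∘ X T` has junk integral `0`, and then so does `(f + 1) ∘ X T`,
  -- whereas the difference of these two integrals tends to `1`.
  have hlim : Tendsto (fun T => ∫ ω, (f + 1) (X T ω) ∂P - ∫ ω, f (X T ω) ∂P) atTop (𝓝 1) := by
    have h := (hX (f + 1)).sub (hX f)
    simp only [BoundedContinuousFunction.coe_add, BoundedContinuousFunction.coe_one, Pi.add_apply,
      Pi.one_apply] at h ⊢
    rwa [integral_add (f.integrable ν) (integrable_const 1), integral_const, probReal_univ,
      smul_eq_mul, mul_one, add_sub_cancel_left] at h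
  filter_upwards [hlim.eventually_ne one_ne_zero] with T hT
  by_contra hf
  have hf1 : ¬ Integrable (fun ω => f (X T ω) + 1) P := integrable_add_const_iff.not.2 hf
  simp [integral_undef hf, integral_undef hf1] at hT

lemma measure_one_le_le_ofReal_integral {Ω : Type*} [MeasurableSpace Ω] {P : Measure Ω}
    [IsFiniteMeasure P] {f : Ω → ℝ} (hf : 0 ≤ᵐ[P] f) (hfi : Integrable f P) :
    P {ω | 1 ≤ f ω} ≤ ENNReal.ofReal (∫ ω, f ω ∂P) :=
  (ENNReal.le_ofReal_iff_toReal_le (measure_ne_top _ _) (integral_nonneg_of_ae hf)).2 <| by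
    simpa [measureReal_def] using mul_meas_ge_le_integral_of_nonneg hf hfi 1

variable [NormedSpace ℝ E] [MeasurableSpace E] [OpensMeasurableSpace E]
  {Ω : Type*} [MeasurableSpace Ω] {P : Measure Ω} [IsFiniteMeasure P]

lemma TendstoInDistrib.tendsto_measure_lt_norm_sub {X : ℕ → Ω → E} {μ : E} {r : ℕ → ℝ}
    (hr : Tendsto r atTop atTop) {ν : Measure E} [IsProbabilityMeasure ν]
    (hX : TendstoInDistrib P (fun T ω => r T • (X T ω - μ)) ν) {ε : ℝ} (hε : 0 < ε) :
    Tendsto (fun T => P {ω | ε < ‖X T ω - μ‖}) atTop (𝓝 0) := by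
  refine ENNReal.tendsto_nhds_zero.2 fun δ hδ => ?_
  obtain ⟨η, -, hη, hηδ⟩ := ENNReal.lt_iff_exists_real_btwn.1 hδ
  obtain ⟨k, hk⟩ := ((tendsto_integral_normCutoff ν).eventually
    (eventually_lt_nhds (ENNReal.ofReal_pos.1 hη))).exists
  filter_upwards [hX.eventually_integrable_comp (normCutoff k),
    (hX (normCutoff k)).eventually (eventually_lt_nhds hk),
    hr.eventually_ge_atTop 0, hr.eventually_ge_atTop ((k + 1) / ε)] with T hint hsmall hr0 hrk
  have hfar : {ω | ε < ‖X T ω - μ‖} ⊆ {ω | 1 ≤ normCutoff k (r T • (X T ω - μ))} := by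
    intro ω (hω : ε < ‖X T ω - μ‖)
    refine (normCutoff_eq_one ?_).ge
    rw [norm_smul, Real.norm_of_nonneg hr0]
    calc k + 1 = (k + 1) / ε * ε := by field_simp
      _ ≤ r T * ‖X T ω - μ‖ := by gcongr
  calc P {ω | ε < ‖X T ω - μ‖}
      ≤ ENNReal.ofReal (∫ ω, normCutoff k (r T • (X T ω - μ)) ∂P) :=
        (measure_mono hfar).trans <|
          measure_one_le_le_ofReal_integral (ae_of_all _ fun _ => normCutoff_nonneg _ _) hint
    _ ≤ δ := (ENNReal.ofReal_le_ofReal hsmall.le).trans hηδ.le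

lemma TendstoInDistrib.tendstoInProb_apply {ι : Type*} [Fintype ι] [MeasurableSpace (ι → ℝ)]
    [OpensMeasurableSpace (ι → ℝ)] {X : ℕ → Ω → ι → ℝ} {μ : ι → ℝ} {r : ℕ → ℝ}
    (hr : Tendsto r atTop atTop) {ν : Measure (ι → ℝ)} [IsProbabilityMeasure ν]
    (hX : TendstoInDistrib P (fun T ω j => r T * (X T ω j - μ j)) ν) (j : ι) :
    TendstoInProb P (fun T ω => X T ω j) (μ j) := fun _ hε =>
  tendsto_nhds_bot_mono (hX.tendsto_measure_lt_norm_sub (μ := μ) hr hε) <|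
    Eventually.of_forall fun _ => measure_mono fun _ hω =>
      lt_of_lt_of_le hω (norm_le_pi_norm (_ - μ) j)

end Consistency

lemma sum_sum_mul_mul_le_mul_sq_sum {ι : Type*} [Fintype ι] {w : ι → ℝ} {M : ι → ι → ℝ} {B : ℝ}
    (hw : ∀ i, 0 ≤ w i) (hM : ∀ i j, M i j ≤ B) :
    ∑ i, ∑ j, w i * M i j * w j ≤ B * (∑ i, w i) ^ 2 := by
  calc ∑ i, ∑ j, w i * M i j * w j ≤ ∑ i, ∑ j, B * (w i * w j) :=
        Finset.sum_le_sum fun i _ => Finset.sum_le_sum fun j _ => by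
          nlinarith [mul_nonneg (hw i) (hw j), hM i j]
    _ = B * (∑ i, w i) ^ 2 := by
        rw [sq, Finset.sum_mul_sum, Finset.mul_sum]
        simp only [Finset.mul_sum]

lemma Lambda_nonpos {K : ℕ → ℝ} {ψt : ℝ → ℝ} {n : ℕ} {a ΨL ΨR : Fin n → ℝ} {T : ℕ} {m v : ℝ}
    (hψt : ∀ x, ψt x ≤ 0) (hjump : ∀ i, ΨR i ≤ ΨL i) (hK : 0 ≤ K T) (hv : 0 ≤ v) :
    Lambda K ψt a ΨL ΨR T m v ≤ 0 := by
  have hdrift : v * ψt (K T * m) * K T / Real.sqrt T ≤ 0 :=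
    div_nonpos_of_nonpos_of_nonneg
      (mul_nonpos_of_nonpos_of_nonneg (mul_nonpos_of_nonneg_of_nonpos hv (hψt _)) hK)
      (Real.sqrt_nonneg _)
  have hjumps : 0 ≤ Real.sqrt v *
      ∑ i, (ΨL i - ΨR i) * normalPDF (a i * Real.sqrt T / (Real.sqrt v * K T)) :=
    mul_nonneg (Real.sqrt_nonneg _) <| Finset.sum_nonneg fun i _ =>
      mul_nonneg (sub_nonneg.2 (hjump i)) (normalPDF_nonneg _)
  rw [Lambda]
  linarith

section StatisticBounds

variable {p n : ℕ} {Ω : Type*} {Ψ ψt : ℝ → ℝ} {a ΨL ΨR : Fin n → ℝ} {K : ℕ → ℝ}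
  {muhat thetahat : ℕ → Ω → Fin p → ℝ} {Vhat : ℕ → Ω → Matrix (Fin p) (Fin p) ℝ} {T : ℕ} {ω : Ω}

lemma Qstat_le_one : Qstat Ψ ψt a ΨL ΨR K muhat Vhat thetahat T ω ≤ 1 := by
  unfold Qstat
  split_ifs
  exacts [stdNormalCDF_le_one _, le_rfl]

lemma Q2stat_le_sqrt_mul_sum_Psihat {B : ℝ} (hΨ : ∀ x, 0 ≤ Ψ x) (hB : 0 ≤ B)
    (hθVθ : ∀ i j, thetahat T ω i * Vhat T ω i j * thetahat T ω j ≤ B) :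
    Q2stat Ψ K muhat Vhat thetahat T ω ≤ √B * ∑ j, Psihat Ψ K muhat thetahat T ω j := by
  have hw : ∀ j, 0 ≤ Psihat Ψ K muhat thetahat T ω j := fun _ => hΨ _
  have hquad := sum_sum_mul_mul_le_mul_sq_sum hw hθVθ
  calc Q2stat Ψ K muhat Vhat thetahat T ω
      ≤ √(B * (∑ j, Psihat Ψ K muhat thetahat T ω j) ^ 2) := by
        refine Real.sqrt_le_sqrt (le_of_eq_of_le ?_ hquad)
        refine Finset.sum_congr rfl fun i _ => Finset.sum_congr rfl fun j _ => ?_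
        ring
    _ = √B * ∑ j, Psihat Ψ K muhat thetahat T ω j := by
        rw [Real.sqrt_mul hB, Real.sqrt_sq (Finset.sum_nonneg fun j _ => hw j)]

lemma sqrt_mul_mul_sum_Psihat_le_Q1stat {c : ℝ} (hΨ : ∀ x, 0 ≤ Ψ x)
    (hΛ : ∀ j, Lambda K ψt a ΨL ΨR T (thetahat T ω j * muhat T ω j)
      ((thetahat T ω j) ^ 2 * Vhat T ω j j) ≤ 0)
    (hc : ∀ j, c ≤ thetahat T ω j * muhat T ω j) :
    √T * c * ∑ j, Psihat Ψ K muhat thetahat T ω j ≤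
      Q1stat Ψ ψt a ΨL ΨR K muhat Vhat thetahat T ω := by
  have hsum : c * ∑ j, Psihat Ψ K muhat thetahat T ω j
      ≤ ∑ j, Psihat Ψ K muhat thetahat T ω j * thetahat T ω j * muhat T ω j := by
    rw [Finset.mul_sum]
    refine Finset.sum_le_sum fun j _ => ?_
    calc c * Psihat Ψ K muhat thetahat T ω j
        ≤ thetahat T ω j * muhat T ω j * Psihat Ψ K muhat thetahat T ω j :=
          mul_le_mul_of_nonneg_right (hc j) (hΨ _)
      _ = Psihat Ψ K muhat thetahat T ω j * thetahat T ω j * muhat T ω j := by ring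
  have hΛsum := Finset.sum_nonpos fun j (_ : j ∈ Finset.univ) => hΛ j
  have := mul_le_mul_of_nonneg_left hsum (Real.sqrt_nonneg (T : ℝ))
  rw [Q1stat]
  linarith

lemma stdNormalCDF_le_Qstat {c B : ℝ} (hΨ : ∀ x, 0 ≤ Ψ x)
    (hΛ : ∀ j, Lambda K ψt a ΨL ΨR T (thetahat T ω j * muhat T ω j)
      ((thetahat T ω j) ^ 2 * Vhat T ω j j) ≤ 0)
    (hc0 : 0 < c) (hB : 0 < B) (hc : ∀ j, c ≤ thetahat T ω j * muhat T ω j)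
    (hθVθ : ∀ i j, thetahat T ω i * Vhat T ω i j * thetahat T ω j ≤ B) :
    stdNormalCDF (√T * c / √B) ≤ Qstat Ψ ψt a ΨL ΨR K muhat Vhat thetahat T ω := by
  unfold Qstat
  split_ifs with hQ2
  · refine monotone_stdNormalCDF ((div_le_div_iff₀ (Real.sqrt_pos.2 hB) hQ2).2 ?_)
    have hQ2le := Q2stat_le_sqrt_mul_sum_Psihat (K := K) (muhat := muhat) hΨ hB.le hθVθ
    have hQ1ge := sqrt_mul_mul_sum_Psihat_le_Q1stat hΨ hΛ hc
    have hTc : 0 ≤ √T * c := mul_nonneg (Real.sqrt_nonneg _) hc0.le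
    calc √T * c * Q2stat Ψ K muhat Vhat thetahat T ω
        ≤ √T * c * (√B * ∑ j, Psihat Ψ K muhat thetahat T ω j) := by gcongr
      _ = √B * (√T * c * ∑ j, Psihat Ψ K muhat thetahat T ω j) := by ring
      _ ≤ Q1stat Ψ ψt a ΨL ΨR K muhat Vhat thetahat T ω * √B := by
        rw [mul_comm _ √B]; gcongr
  · exact stdNormalCDF_le_one _

end StatisticBounds

theorem Q_tendsto_one_under_null_interior_general
    {Ω : Type*} [MeasurableSpace Ω] (P : Measure Ω) [IsProbabilityMeasure P]
    {p : ℕ}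
    -- the smoothed indicator
    (Ψ ψ ψt : ℝ → ℝ) {n : ℕ} (a ΨL ΨR : Fin n → ℝ)
    (hΨanti : Antitone Ψ) (hΨ01 : ∀ x : ℝ, 0 ≤ Ψ x ∧ Ψ x ≤ 1)
    (hderiv : ∀ x ∉ Set.range a, HasDerivAt Ψ (ψ x) x)
    (hψt : ∀ x : ℝ, Tendsto ψ (nhdsWithin x (Set.Iio x)) (nhds (ψt x)))
    (hΨL : ∀ i, Tendsto Ψ (nhdsWithin (a i) (Set.Iio (a i))) (nhds (ΨL i)))
    (hΨR : ∀ i, Tendsto Ψ (nhdsWithin (a i) (Set.Ioi (a i))) (nhds (ΨR i)))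
    -- the tuning sequence
    (K : ℕ → ℝ) (hKpos : ∀ T, 0 < K T)
    -- the data
    (muhat thetahat : ℕ → Ω → Fin p → ℝ)
    (Vhat : ℕ → Ω → Matrix (Fin p) (Fin p) ℝ)
    (hVhatPSD : ∀ T, ∀ᵐ ω ∂P, (Vhat T ω).PosSemidef)
    -- the parameters
    (μ : Fin p → ℝ) (V : Matrix (Fin p) (Fin p) ℝ) (hV : V.PosSemidef)
    (θ : Fin p → ℝ) (hθpos : ∀ j, 0 < θ j)
    -- [D1] : √T·(μ̂_T − μ) converges in distribution to N(0, V)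
    (hD1 : TendstoInDistrib P
      (fun T ω j => Real.sqrt T * (muhat T ω j - μ j)) (gaussianPi 0 hV))
    -- [D3] : V̂_T → V in probability entrywise
    (hD3 : ∀ i j, TendstoInProb P (fun T ω => Vhat T ω i j) (V i j))
    -- [D4] : θ̂_T → θ in probability
    (hD4 : ∀ j, TendstoInProb P (fun T ω => thetahat T ω j) (θ j))
    -- all inequalities are strictly non-binding
    (hpos : ∀ j, 0 < μ j) :
    TendstoInProb P (Qstat Ψ ψt a ΨL ΨR K muhat Vhat thetahat) 1 := by
  have hψt_nonpos : ∀ x, ψt x ≤ 0 := fun x =>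
    hΨanti.nonpos_of_tendsto_nhdsLT_of_hasDerivAt (Set.finite_range a) hderiv (hψt x)
  have hjump : ∀ i, ΨR i ≤ ΨL i := fun i =>
    hΨanti.le_of_tendsto_nhdsLT_of_tendsto_nhdsGT (hΨL i) (hΨR i)
  have hsqrt : Tendsto (fun T : ℕ => √T) atTop atTop :=
    Real.tendsto_sqrt_atTop.comp tendsto_natCast_atTop_atTop
  have hθμ : ∀ j, TendstoInProb P (fun T ω => thetahat T ω j * muhat T ω j) (θ j * μ j) :=
    fun j => (hD4 j).mul (hD1.tendstoInProb_apply hsqrt j)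
  have hθVθ : ∀ i j, TendstoInProb P (fun T ω => thetahat T ω i * Vhat T ω i j * thetahat T ω j)
      (θ i * V i j * θ j) := fun i j => ((hD4 i).mul (hD3 i j)).mul (hD4 j)
  obtain ⟨c, hc0, hc⟩ : ∃ c, 0 < c ∧ ∀ j, c < θ j * μ j :=
    (eventually_mem_nhdsWithin.and <| eventually_all.2 fun j =>
      eventually_nhdsWithin_of_eventually_nhds
        (eventually_lt_nhds (mul_pos (hθpos j) (hpos j)))).exists (f := 𝓝[>] (0 : ℝ))
  obtain ⟨B, hB0, hB⟩ : ∃ B, 0 < B ∧ ∀ i j, θ i * V i j * θ j < B :=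
    ((eventually_gt_atTop 0).and <| eventually_all.2 fun i => eventually_all.2 fun j =>
      eventually_gt_atTop _).exists
  refine tendstoInProb_of_le_of_ae_ge (L := fun T => stdNormalCDF (√T * c / √B))
    (fun T ω => Qstat_le_one) (tendsto_stdNormalCDF_atTop.comp <|
      (hsqrt.atTop_mul_const (div_pos hc0 (Real.sqrt_pos.2 hB0))).congr fun T =>
        (mul_div_assoc _ _ _).symm)
    (tendsto_measure_union_nhds_zero
      (tendsto_measure_iUnion_nhds_zero fun j => (hθμ j).tendsto_measure_le (hc j))
      (tendsto_measure_iUnion_nhds_zero fun ij : Fin p × Fin p =>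
        (hθVθ ij.1 ij.2).tendsto_measure_ge (hB ij.1 ij.2))) fun T => ?_
  filter_upwards [hVhatPSD T] with ω hPSD hgood
  simp only [Set.mem_union, Set.mem_iUnion, Set.mem_ofPred_eq, not_or, not_exists, not_le] at hgood
  exact stdNormalCDF_le_Qstat (fun x => (hΨ01 x).1)
    (fun j => Lambda_nonpos hψt_nonpos hjump (hKpos T).le
      (mul_nonneg (sq_nonneg _) hPSD.diag_nonneg))
    hc0 hB0 (fun j => (hgood.1 j).le) (fun i j => (hgood.2 (i, j)).le)

/-- Theorem 1, part 2: if all constraints are strictly non-binding, `Q → 1` in probability. -/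
theorem Q_tendsto_one_under_null_interior
    {Ω : Type*} [MeasurableSpace Ω] (P : Measure Ω) [IsProbabilityMeasure P]
    {p : ℕ} (hp : 0 < p)
    -- the smoothed indicator
    (Ψ ψ ψt : ℝ → ℝ) {n : ℕ} (a ΨL ΨR : Fin n → ℝ) (bΨ : ℝ)
    (hΨanti : Antitone Ψ) (hΨ01 : ∀ x : ℝ, 0 ≤ Ψ x ∧ Ψ x ≤ 1) (hΨ0 : 0 < Ψ 0)
    (ha : StrictMono a) (hane : ∀ i, a i ≠ 0)
    (hderiv : ∀ x ∉ Set.range a, HasDerivAt Ψ (ψ x) x)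
    (hψcont : ContinuousOn ψ (Set.range a)ᶜ)
    (hψbd : ∀ x ∉ Set.range a, |ψ x| ≤ bΨ)
    (hψt : ∀ x : ℝ, Tendsto ψ (nhdsWithin x (Set.Iio x)) (nhds (ψt x)))
    (hΨL : ∀ i, Tendsto Ψ (nhdsWithin (a i) (Set.Iio (a i))) (nhds (ΨL i)))
    (hΨR : ∀ i, Tendsto Ψ (nhdsWithin (a i) (Set.Ioi (a i))) (nhds (ΨR i)))
    -- the tuning sequence
    (K : ℕ → ℝ) (hKpos : ∀ T, 0 < K T) (hKmono : StrictMono K)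
    (hKtop : Tendsto K atTop atTop)
    (hKo : Tendsto (fun T : ℕ => K T / Real.sqrt T) atTop (nhds 0))
    (hA6 : ∀ x : ℝ, 0 < x →
      Tendsto (fun T : ℕ => Real.sqrt T * Ψ (K T * x)) atTop (nhds 0))
    -- the data
    (muhat thetahat : ℕ → Ω → Fin p → ℝ)
    (Vhat : ℕ → Ω → Matrix (Fin p) (Fin p) ℝ)
    (hVhatPSD : ∀ T, ∀ᵐ ω ∂P, (Vhat T ω).PosSemidef)
    (hthetahatpos : ∀ T, ∀ᵐ ω ∂P, ∀ j, 0 < thetahat T ω j)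
    -- the parameters
    (μ : Fin p → ℝ) (V : Matrix (Fin p) (Fin p) ℝ) (hV : V.PosSemidef)
    (θ : Fin p → ℝ) (hθpos : ∀ j, 0 < θ j)
    -- [D1] : √T·(μ̂_T − μ) converges in distribution to N(0, V)
    (hD1 : TendstoInDistrib P
      (fun T ω j => Real.sqrt T * (muhat T ω j - μ j)) (gaussianPi 0 hV))
    -- [D2] : V·Δ·d(μ) ≠ 0 whenever d(μ) ≠ 0
    (hD2 : (fun j => if μ j < 0 then (1 : ℝ) else if μ j = 0 then Ψ 0 else 0) ≠ 0 →
      V.mulVec (fun j =>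
        θ j * (if μ j < 0 then (1 : ℝ) else if μ j = 0 then Ψ 0 else 0)) ≠ 0)
    -- [D3] : V̂_T → V in probability entrywise
    (hD3 : ∀ i j, TendstoInProb P (fun T ω => Vhat T ω i j) (V i j))
    -- [D4] : θ̂_T → θ in probability
    (hD4 : ∀ j, TendstoInProb P (fun T ω => thetahat T ω j) (θ j))
    -- all inequalities are strictly non-binding
    (hpos : ∀ j, 0 < μ j) :
    TendstoInProb P (Qstat Ψ ψt a ΨL ΨR K muhat Vhat thetahat) 1 :=
  Q_tendsto_one_under_null_interior_general P Ψ ψ ψt a ΨL ΨR hΨanti hΨ01 hderiv hψt hΨL hΨR K hKpos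
    muhat thetahat Vhat hVhatPSD μ V hV θ hθpos hD1 hD3 hD4 hpos

end
end
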